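/- Let h denote the binary entropy function h(q) = −q·log₂(q) − (1−q)·log₂(1−q) (with h(0)=h(1)=0), and define G : [3/4, (2+√2)/4] → ℝ by G(x) = 1 − h(1/2 + (1/2)·√(16x² − 16x + 3)). Then the derivative of G is strictly increasing on the open interval (3/4, (2+√2)/4); equivalently, G is strictly convex on [3/4, (2+√2)/4]. -/

import Mathlib

/-!
With `z = √(16x² − 16x + 3)`, so that `1 + z² = (4x − 2)²`, the chain rule gives
`G′(x) = (4 / log 2) · (4x − 2) · artanh z / z`. On the interval, `4x − 2` is positive and
strictly increasing, `z ∈ (0, 1)` increases with `x`, and `artanh z / z = ∑ z^(2k) / (2k + 1)`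
is positive and increasing in `z`. Hence `G′` is strictly increasing, and `G` is strictly convex.
-/

/-- The binary entropy function `h(q) = −q·log₂ q − (1−q)·log₂(1−q)`
(with the conventions `h 0 = h 1 = 0`, which hold automatically since
`Real.logb 2 0 = 0`). -/
noncomputable def binaryEntropy (q : ℝ) : ℝ :=
  -q * Real.logb 2 q - (1 - q) * Real.logb 2 (1 - q)

/-- The single-round entropy bound of the CHSH-based protocol, as a function of
the CHSH winning probability `x ∈ [3/4, (2+√2)/4]`. -/
noncomputable def chshEntropyBound (x : ℝ) : ℝ :=
  1 - binaryEntropy (1 / 2 + (1 / 2) * Real.sqrt (16 * x ^ 2 - 16 * x + 3))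

open Real Set

lemma binaryEntropy_eq_binEntropy_div_log_two :
    binaryEntropy = fun q ↦ binEntropy q / log 2 := by
  funext q
  simp only [binaryEntropy, binEntropy, logb, log_inv]
  ring

@[fun_prop]
lemma continuous_binaryEntropy : Continuous binaryEntropy := by
  rw [binaryEntropy_eq_binEntropy_div_log_two]
  exact binEntropy_continuous.div_const _

lemma hasDerivAt_binaryEntropy {q : ℝ} (h₀ : q ≠ 0) (h₁ : q ≠ 1) :
    HasDerivAt binaryEntropy ((log (1 - q) - log q) / log 2) q := by
  rw [binaryEntropy_eq_binEntropy_div_log_two]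
  exact (hasDerivAt_binEntropy h₀ h₁).div_const _

lemma two_mul_artanh {z : ℝ} (hz : z ∈ Ioo (-1) 1) :
    2 * artanh z = log (1 + z) - log (1 - z) := by
  rw [artanh_eq_half_log (Ioo_subset_Icc_self hz),
    log_div (by linarith [hz.1]) (by linarith [hz.2])]
  ring

lemma hasSum_artanh_div_self {z : ℝ} (hz : z ∈ Ioo (-1) 1) (hz₀ : z ≠ 0) :
    HasSum (fun k : ℕ ↦ z ^ (2 * k) / (2 * k + 1)) (artanh z / z) := by
  have hs := (hasSum_log_sub_log_of_abs_lt_one (abs_lt.2 hz)).div_const (2 * z)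
  rw [← two_mul_artanh hz, mul_div_mul_left _ _ two_ne_zero] at hs
  refine hs.congr_fun fun k ↦ ?_
  field_simp
  ring

lemma monotoneOn_artanh_div_self : MonotoneOn (fun z ↦ artanh z / z) (Ioo 0 1) := by
  intro z hz w hw hzw
  have mem {t : ℝ} (ht : t ∈ Ioo (0 : ℝ) 1) : t ∈ Ioo (-1) 1 := ⟨by linarith [ht.1], ht.2⟩
  refine hasSum_le (fun k ↦ ?_) (hasSum_artanh_div_self (mem hz) hz.1.ne')
    (hasSum_artanh_div_self (mem hw) hw.1.ne')
  have hz₀ := hz.1.le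
  gcongr

lemma sqrt_chsh_mem_Ioo {x : ℝ} (hx : x ∈ Ioo (3 / 4) ((2 + √2) / 4)) :
    √(16 * x ^ 2 - 16 * x + 3) ∈ Ioo 0 1 := by
  obtain ⟨h₁, h₂⟩ := hx
  have hsqrt2 : √2 ^ 2 = 2 := sq_sqrt zero_le_two
  exact ⟨sqrt_pos.2 (by nlinarith), (sqrt_lt' one_pos).2 (by nlinarith)⟩

lemma hasDerivAt_chshEntropyBound {x : ℝ} (hx : x ∈ Ioo (3 / 4) ((2 + √2) / 4)) :
    HasDerivAt chshEntropyBound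
      (4 / log 2 * ((4 * x - 2) *
        (artanh √(16 * x ^ 2 - 16 * x + 3) / √(16 * x ^ 2 - 16 * x + 3)))) x := by
  set z := √(16 * x ^ 2 - 16 * x + 3) with hz_def
  have hz := sqrt_chsh_mem_Ioo hx
  have hu : HasDerivAt (fun y : ℝ ↦ 16 * y ^ 2 - 16 * y + 3) (32 * x - 16) x :=
    ((((hasDerivAt_pow 2 x).const_mul 16).fun_sub ((hasDerivAt_id' x).const_mul 16)).add_const
      3).congr_deriv (by push_cast; ring)
  have hp := ((hu.sqrt (sqrt_pos.1 hz.1).ne').const_mul (1 / 2 : ℝ)).const_add (1 / 2 : ℝ)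
  have hH := hasDerivAt_binaryEntropy (q := 1 / 2 + 1 / 2 * z)
    (by linarith [hz.1]) (by linarith [hz.2])
  show HasDerivAt (fun y ↦ 1 - binaryEntropy (1 / 2 + 1 / 2 * √(16 * y ^ 2 - 16 * y + 3))) _ x
  refine ((hH.comp x hp).const_sub 1).congr_deriv ?_
  have hlog : log (1 - (1 / 2 + 1 / 2 * z)) - log (1 / 2 + 1 / 2 * z) = -(2 * artanh z) := by
    rw [two_mul_artanh ⟨by linarith [hz.1], hz.2⟩]
    have e₁ : 1 - (1 / 2 + 1 / 2 * z) = (1 - z) / 2 := by ring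
    have e₂ : 1 / 2 + 1 / 2 * z = (1 + z) / 2 := by ring
    rw [e₁, e₂, log_div (by linarith [hz.2]) two_ne_zero, log_div (by linarith [hz.1]) two_ne_zero]
    ring
  rw [hlog, ← hz_def]
  field_simp
  ring

lemma strictMonoOn_deriv_chshEntropyBound :
    StrictMonoOn (deriv chshEntropyBound) (Ioo (3 / 4) ((2 + √2) / 4)) := by
  intro x hx y hy hxy
  rw [(hasDerivAt_chshEntropyBound hx).deriv, (hasDerivAt_chshEntropyBound hy).deriv]
  have hz_le : √(16 * x ^ 2 - 16 * x + 3) ≤ √(16 * y ^ 2 - 16 * y + 3) :=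
    sqrt_le_sqrt (by nlinarith [hx.1])
  have hslope := monotoneOn_artanh_div_self (sqrt_chsh_mem_Ioo hx) (sqrt_chsh_mem_Ioo hy) hz_le
  have hslope_pos : 0 < artanh √(16 * x ^ 2 - 16 * x + 3) / √(16 * x ^ 2 - 16 * x + 3) :=
    div_pos (artanh_pos (sqrt_chsh_mem_Ioo hx)) (sqrt_chsh_mem_Ioo hx).1
  exact mul_lt_mul_of_pos_left (mul_lt_mul (by linarith) hslope hslope_pos (by linarith [hy.1]))
    (by positivity)

/-- The derivative of `G(x) = 1 − h(1/2 + (1/2)√(16x² − 16x + 3))` is strictly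
increasing on the open interval `(3/4, (2+√2)/4)`; equivalently, `G` is strictly
convex on `[3/4, (2+√2)/4]`. -/
theorem chshEntropyBound_deriv_strictMono_and_strictConvex :
    StrictMonoOn (deriv chshEntropyBound)
      (Set.Ioo (3 / 4 : ℝ) ((2 + Real.sqrt 2) / 4)) ∧
    StrictConvexOn ℝ (Set.Icc (3 / 4 : ℝ) ((2 + Real.sqrt 2) / 4))
      chshEntropyBound := by
  refine ⟨strictMonoOn_deriv_chshEntropyBound, ?_⟩
  have hcont : Continuous chshEntropyBound := by
    unfold chshEntropyBound
    fun_prop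
  refine StrictMonoOn.strictConvexOn_of_deriv (convex_Icc _ _) hcont.continuousOn ?_
  rw [interior_Icc]
  exact strictMonoOn_deriv_chshEntropyBound
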